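/- Let A be a unital C*-algebra with two one-parameter groups of *-automorphisms α^u and α^w that commute, and let κ be a *-automorphism of A satisfying κ ∘ α^u_t = α^w_t ∘ κ for all t ∈ ℝ. Let ω be a state on A with GNS data (π, H, Ω) such that: Ω is separating for M = π(A)''; ω is primary (M is a factor); (A, α^w, ω) is mixing; and for every a ∈ A and every X' ∈ (M ∩ M')', the commutator [π(α^w_{−t}(α^u_t(a))), X'] converges to 0 in the weak operator topology as t → +∞. If ω ∘ κ ≠ ω (ω is not invariant under κ), then κ is not unitarily implemented in the GNS representation of ω: there exists no unitary U : H → H with π(κ(a)) = U π(a) U⁻¹ for all a ∈ A. -/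

import Mathlib

/-!
If `U` implemented `κ`, the vector states of `U Ω` and `U⁻¹ Ω` would be `ω ∘ κ⁻¹` and `ω ∘ κ`.
Mixing makes `π (αw t b)` converge weakly to `ω b • 1` as `t → ±∞`: the two-point clustering
`⟪π c Ω, π (αw t b) Ω⟫ → ω b ⟪π c Ω, Ω⟫` extends to all matrix elements because `Ω` is cyclic
for `π(A)` and, being separating for `M`, also cyclic for `M'`. Read in the two vector states this
gives `ω (αu t a) → ω (κ a)` and `ω (κ (αw (-t) a)) → ω a`. As `M` is a factor, `(M ∩ M')'` contains
the rank-one operator `|U⁻¹ Ω⟩⟨Ω|`, and asymptotic abelianness against it says that the difference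
of these two expressions tends to `0`; hence `ω ∘ κ = ω`.
-/

open Filter
open scoped ComplexOrder ComplexInnerProductSpace

/-- Convergence in the weak operator topology along a filter. -/
def WOTTendsto {H : Type*} [NormedAddCommGroup H] [InnerProductSpace ℂ H]
    (T : ℝ → (H →L[ℂ] H)) (l : Filter ℝ) (S : H →L[ℂ] H) : Prop :=
  ∀ v w : H, Tendsto (fun t => ⟪v, T t w⟫) l (nhds ⟪v, S w⟫)

open Set Submodule Topology InnerProductSpace

theorem ContinuousLinearMap.tendsto_apply_of_dense_span {ι 𝕜 𝕜₂ E F : Type*}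
    [NontriviallyNormedField 𝕜] [NontriviallyNormedField 𝕜₂] {σ : 𝕜 →+* 𝕜₂}
    [RingHomIsometric σ] [SeminormedAddCommGroup E] [NormedSpace 𝕜 E]
    [SeminormedAddCommGroup F] [NormedSpace 𝕜₂ F] {l : Filter ι} {f : ι → E →SL[σ] F}
    {g : E →SL[σ] F} {C : ℝ} (hC : ∀ i, ‖f i‖ ≤ C) {s : Set E}
    (hs : Dense (span 𝕜 s : Set E)) (h : ∀ x ∈ s, Tendsto (f · x) l (𝓝 (g x))) (x : E) :
    Tendsto (f · x) l (𝓝 (g x)) := by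
  let P : Submodule 𝕜 E :=
    { carrier := {x | Tendsto (f · x) l (𝓝 (g x))}
      zero_mem' := by simpa using tendsto_const_nhds
      add_mem' := fun hx hy => by simpa using hx.add hy
      smul_mem' := fun c x hx => by simpa using hx.const_smul (σ c) }
  have hbdd : ∃ C, ∀ i, ‖f i‖ ≤ C := ⟨C, hC⟩
  have hf : Equicontinuous ((↑) ∘ f) := ((NormedSpace.equicontinuous_TFAE f).out 5 1).mp hbdd
  exact (hf.isClosed_setOfPred_tendsto g.continuous).closure_subset_iff.mpr
    (span_le (p := P).mpr h) (hs x)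

section HilbertSpace

variable {H : Type*} [NormedAddCommGroup H] [InnerProductSpace ℂ H]

theorem WOTTendsto.tendsto_inner_self {T : ℝ → H →L[ℂ] H} {l : Filter ℝ} {μ : ℂ}
    (hT : WOTTendsto T l (μ • 1)) {v : H} (hv : ‖v‖ = 1) :
    Tendsto (fun t => ⟪v, T t v⟫) l (𝓝 μ) := by
  simpa [inner_smul_right, inner_self_eq_norm_sq_to_K, hv] using hT v v

theorem inner_commutator_rankOne_apply {ψ Ω : H} (hψ : ‖ψ‖ = 1) (hΩ : ‖Ω‖ = 1)
    (T : H →L[ℂ] H) :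
    ⟪ψ, (T * rankOne ℂ ψ Ω - rankOne ℂ ψ Ω * T) Ω⟫ = ⟪ψ, T ψ⟫ - ⟪Ω, T Ω⟫ := by
  simp [inner_self_eq_norm_sq_to_K, hψ, hΩ]

variable [CompleteSpace H]

theorem dense_span_image_centralizer_of_separating {S : Set (H →L[ℂ] H)} (hS : star S ⊆ S)
    {Ω : H} (hsep : ∀ X ∈ centralizer (centralizer S), X Ω = 0 → X = 0) :
    Dense (span ℂ ((· Ω) '' centralizer S) : Set H) := by
  set K := (span ℂ ((· Ω) '' centralizer S)).topologicalClosure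
  have hinv : ∀ Y ∈ centralizer S, K ∈ Module.End.invtSubmodule (Y : H →ₗ[ℂ] H) := by
    intro Y hY
    refine topologicalClosure_mem_invtSubmodule ?_
    rw [Module.End.mem_invtSubmodule, span_le]
    rintro _ ⟨Z, hZ, rfl⟩
    exact subset_span ⟨Y * Z, mul_mem_centralizer hY hZ, rfl⟩
  have hP : K.starProjection ∈ centralizer (centralizer S) := by
    intro Y hY
    have hY' : ContinuousLinearMap.adjoint Y ∈ centralizer S :=
      star_mem_centralizer' (fun a ha => hS (star_mem_star.mpr ha)) hY
    refine (ContinuousLinearMap.IsIdempotentElem.commute_iff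
      (isIdempotentElem_starProjection K) |>.mpr ⟨?_, ?_⟩).eq.symm
    · simpa using hinv Y hY
    · simpa using ContinuousLinearMap.orthogonal_mem_invtSubmodule (hinv _ hY')
  have hΩ : Ω ∈ K := subset_closure (subset_span ⟨1, one_mem_centralizer, rfl⟩)
  have hP1 : 1 - K.starProjection = 0 :=
    hsep _ (sub_mem (one_mem (Subring.centralizer _)) (Subring.mem_centralizer_iff.mpr hP))
      (by simp [starProjection_eq_self_iff.mpr hΩ])
  rw [dense_iff_topologicalClosure_eq_top, eq_top_iff]
  intro x _
  rw [← starProjection_eq_self_iff, eq_comm, ← sub_eq_zero]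
  simpa using congr($hP1 x)

theorem wotTendsto_smul_one_of_cyclic_of_separating {S : Set (H →L[ℂ] H)} (hS : star S ⊆ S)
    {Ω : H} (hcyc : Dense (span ℂ ((· Ω) '' S) : Set H))
    (hsep : ∀ X ∈ centralizer (centralizer S), X Ω = 0 → X = 0)
    {T : ℝ → H →L[ℂ] H} (hT : ∀ t, T t ∈ centralizer (centralizer S)) {C : ℝ}
    (hC : ∀ t, ‖T t‖ ≤ C) {l : Filter ℝ} {μ : ℂ}
    (h : ∀ X ∈ S, Tendsto (fun t => ⟪X Ω, T t Ω⟫) l (𝓝 (μ * ⟪X Ω, Ω⟫))) :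
    WOTTendsto T l (μ • 1) := by
  have hnorm : ∀ u : H, ‖innerSLFlip ℂ u‖ ≤ ‖u‖ := fun u =>
    ContinuousLinearMap.opNorm_le_bound _ (norm_nonneg u) fun v => by
      rw [innerSLFlip_apply_apply, mul_comm]
      exact norm_inner_le_norm v u
  have hΩ : ∀ u, Tendsto (fun t => ⟪u, T t Ω⟫) l (𝓝 ⟪u, μ • Ω⟫) := by
    refine ContinuousLinearMap.tendsto_apply_of_dense_span (f := fun t => innerSLFlip ℂ (T t Ω))
      (g := innerSLFlip ℂ (μ • Ω)) (C := C * ‖Ω‖)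
      (fun t => (hnorm _).trans ((T t).le_opNorm Ω |>.trans (by gcongr; exact hC t))) hcyc ?_
    rintro _ ⟨X, hX, rfl⟩
    simpa [innerSLFlip_apply_apply, inner_smul_right] using h X hX
  intro v
  refine ContinuousLinearMap.tendsto_apply_of_dense_span (f := fun t => (innerSL ℂ v).comp (T t))
    (g := (innerSL ℂ v).comp (μ • 1)) (C := ‖v‖ * C)
    (fun t => (ContinuousLinearMap.opNorm_comp_le _ _).trans
      (by rw [innerSL_apply_norm]; gcongr; exact hC t))
    (dense_span_image_centralizer_of_separating hS hsep) ?_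
  rintro _ ⟨Y, hY, rfl⟩
  have hcomm : ∀ t, T t (Y Ω) = Y (T t Ω) := fun t => congr($(hT t Y hY) Ω).symm
  simpa [hcomm, ← ContinuousLinearMap.adjoint_inner_left] using hΩ (ContinuousLinearMap.adjoint Y v)

end HilbertSpace

section CStarAlgebra

variable {A : Type*} [NormedRing A] [StarRing A] [CStarRing A] [CompleteSpace A]
    [NormedAlgebra ℂ A] [StarModule ℂ A]

theorem norm_starAlgEquiv_apply (e : A ≃⋆ₐ[ℂ] A) (a : A) : ‖e a‖ = ‖a‖ :=
  letI : CStarAlgebra A := { }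
  StarAlgEquiv.norm_map e a

variable {H : Type*} [NormedAddCommGroup H] [InnerProductSpace ℂ H] [CompleteSpace H]

theorem norm_starAlgHom_apply_le (π : A →⋆ₐ[ℂ] (H →L[ℂ] H)) (a : A) : ‖π a‖ ≤ ‖a‖ :=
  letI : CStarAlgebra A := { }
  NonUnitalStarAlgHom.norm_apply_le π a

theorem wotTendsto_smul_one_of_cluster (π : A →⋆ₐ[ℂ] (H →L[ℂ] H)) {ω : A →ₗ[ℂ] ℂ} {Ω : H}
    (hrep : ∀ a : A, ω a = ⟪Ω, π a Ω⟫)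
    (hcyc : (span ℂ (range fun b : A => π b Ω)).topologicalClosure = ⊤)
    (hsep : ∀ X ∈ centralizer (centralizer (range fun b : A => π b)), X Ω = 0 → X = 0)
    {β : ℝ → A} {C : ℝ} (hC : ∀ t, ‖β t‖ ≤ C) {l : Filter ℝ} {μ : ℂ}
    (h : ∀ b, Tendsto (fun t => ω (b * β t)) l (𝓝 (μ * ω b))) :
    WOTTendsto (fun t => π (β t)) l (μ • 1) := by
  have hinner : ∀ b c, ⟪π c Ω, π b Ω⟫ = ω (star c * b) := fun b c => by
    rw [hrep, map_mul, map_star, ContinuousLinearMap.star_eq_adjoint]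
    exact (ContinuousLinearMap.adjoint_inner_right _ _ _).symm
  refine wotTendsto_smul_one_of_cyclic_of_separating (S := range fun b : A => π b) ?_ ?_ hsep
    (fun t => subset_centralizer_centralizer ⟨β t, rfl⟩)
    (fun t => (norm_starAlgHom_apply_le π _).trans (hC t)) ?_
  · rintro _ ⟨b, hb⟩
    exact ⟨star b, (map_star π b).trans (by simpa using congr(star $hb))⟩
  · rwa [← range_comp, dense_iff_topologicalClosure_eq_top]
  · rintro _ ⟨c, rfl⟩
    have hΩ : ⟪π c Ω, Ω⟫ = ω (star c) := by simpa using hinner 1 c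
    simpa [hinner, hΩ] using h (star c)

end CStarAlgebra

section StarAlgebra

variable {A : Type*} [Ring A] [StarRing A] [Algebra ℂ A]

theorem map_star_eq_conj_of_eq_inner {H : Type*} [NormedAddCommGroup H] [InnerProductSpace ℂ H]
    [CompleteSpace H] (π : A →⋆ₐ[ℂ] (H →L[ℂ] H)) {ω : A →ₗ[ℂ] ℂ} {Ω : H}
    (hrep : ∀ a : A, ω a = ⟪Ω, π a Ω⟫) (a : A) : ω (star a) = starRingEnd ℂ (ω a) := by
  rw [hrep, hrep, map_star, ContinuousLinearMap.star_eq_adjoint,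
    ContinuousLinearMap.adjoint_inner_right, inner_conj_symm]

theorem tendsto_mul_apply_neg_of_mixing {ω : A →ₗ[ℂ] ℂ}
    (hω : ∀ a, ω (star a) = starRingEnd ℂ (ω a)) (α : ℝ → (A ≃⋆ₐ[ℂ] A))
    (hinv : ∀ t a, ω (α t a) = ω a) (hα : ∀ t a, α t (α (-t) a) = a)
    (hmix : ∀ a b : A, Tendsto (fun t => ω (b * α t a)) atTop (𝓝 (ω a * ω b))) (a b : A) :
    Tendsto (fun t => ω (b * α (-t) a)) atTop (𝓝 (ω a * ω b)) := by
  have hstar : ∀ t, ω (b * α (-t) a) = starRingEnd ℂ (ω (star a * α t (star b))) := fun t => by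
    rw [← hω, star_mul, star_star, ← map_star, star_star, ← hinv t, map_mul, hα]
  have hlim := (Complex.continuous_conj.tendsto _).comp (hmix (star b) (star a))
  rw [map_mul, ← hω, ← hω, star_star, star_star, mul_comm] at hlim
  exact hlim.congr fun t => (hstar t).symm

end StarAlgebra

theorem stmt5_general
    {A : Type*} [NormedRing A] [StarRing A] [CStarRing A] [CompleteSpace A]
    [NormedAlgebra ℂ A] [StarModule ℂ A]
    {H : Type*} [NormedAddCommGroup H] [InnerProductSpace ℂ H] [CompleteSpace H]
    -- two commuting one-parameter groups of *-automorphisms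
    (αu αw : ℝ → (A ≃⋆ₐ[ℂ] A))
    (hw0 : ∀ a : A, αw 0 a = a)
    (hwadd : ∀ s t : ℝ, ∀ a : A, αw (s + t) a = αw s (αw t a))
    (hcomm : ∀ s t : ℝ, ∀ a : A, αu s (αw t a) = αw t (αu s a))
    -- a *-automorphism intertwining the two groups
    (κ : A ≃⋆ₐ[ℂ] A)
    (hκ : ∀ t : ℝ, ∀ a : A, κ (αu t a) = αw t (κ a))
    -- a state
    (ω : A →ₗ[ℂ] ℂ)
    -- GNS data for ω
    (π : A →⋆ₐ[ℂ] (H →L[ℂ] H)) (Ω : H) (hΩnorm : ‖Ω‖ = 1)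
    (hrep : ∀ a : A, ω a = ⟪Ω, π a Ω⟫)
    (hcyc : (Submodule.span ℂ (Set.range fun b : A => π b Ω)).topologicalClosure = ⊤)
    -- Ω separating for M = π(A)''
    (hsep : ∀ X ∈ Set.centralizer (Set.centralizer (Set.range fun b : A => π b)),
        X Ω = 0 → X = 0)
    -- primarity: M ∩ M' = ℂ·1
    (hprim : Set.centralizer (Set.centralizer (Set.range fun b : A => π b)) ∩
        Set.centralizer (Set.centralizer (Set.centralizer (Set.range fun b : A => π b))) =
        Set.range fun c : ℂ => c • (1 : H →L[ℂ] H))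
    -- (A, αw, ω) is mixing
    (hinv : ∀ t : ℝ, ∀ a : A, ω (αw t a) = ω a)
    (hmix : ∀ a b : A, Tendsto (fun t => ω (b * αw t a)) atTop (nhds (ω a * ω b)))
    -- the relative translations αw_{-t} ∘ αu_t act weakly asymptotically abelian in π
    (habel : ∀ a : A,
      ∀ X' ∈ Set.centralizer
        (Set.centralizer (Set.centralizer (Set.range fun b : A => π b)) ∩
          Set.centralizer (Set.centralizer (Set.centralizer (Set.range fun b : A => π b)))),
      WOTTendsto
        (fun t => π (αw (-t) (αu t a)) * X' - X' * π (αw (-t) (αu t a))) atTop 0)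
    -- ω is not κ-invariant
    (hnotinv : ¬ ∀ a : A, ω (κ a) = ω a) :
    ¬ ∃ U : H ≃ₗᵢ[ℂ] H, ∀ (a : A) (v : H), π (κ a) v = U (π a (U.symm v)) := by
  rintro ⟨U, hU⟩
  have hUΩ : ∀ a, ω a = ⟪U Ω, π (κ a) (U Ω)⟫ := fun a => by
    rw [hrep, hU, U.symm_apply_apply, U.inner_map_map]
  have hUsymmΩ : ∀ a, ω (κ a) = ⟪U.symm Ω, π a (U.symm Ω)⟫ := fun a => by
    rw [hrep, hU, ← U.inner_map_map (U.symm Ω), U.apply_symm_apply]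
  have hforward : ∀ b, WOTTendsto (fun t => π (αw t b)) atTop (ω b • 1) := fun b =>
    wotTendsto_smul_one_of_cluster π hrep hcyc hsep
      (fun t => (norm_starAlgEquiv_apply (αw t) b).le) (hmix b)
  have hbackward : ∀ b, WOTTendsto (fun t => π (αw (-t) b)) atTop (ω b • 1) := fun b =>
    wotTendsto_smul_one_of_cluster π hrep hcyc hsep
      (fun t => (norm_starAlgEquiv_apply (αw (-t)) b).le)
      (tendsto_mul_apply_neg_of_mixing (map_star_eq_conj_of_eq_inner π hrep) αw hinv
        (fun t a => by rw [← hwadd, add_neg_cancel, hw0]) hmix b)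
  have hu : ∀ a, Tendsto (fun t => ω (αu t a)) atTop (𝓝 (ω (κ a))) := fun a =>
    ((hforward (κ a)).tendsto_inner_self ((U.norm_map Ω).trans hΩnorm)).congr fun t => by
      rw [hUΩ, hκ]
  have hw : ∀ a, Tendsto (fun t => ω (κ (αw (-t) a))) atTop (𝓝 (ω a)) := fun a =>
    ((hbackward a).tendsto_inner_self ((U.symm.norm_map Ω).trans hΩnorm)).congr fun t =>
      (hUsymmΩ _).symm
  have hrel : ∀ a, Tendsto (fun t => ω (κ (αw (-t) a)) - ω (αu t a)) atTop (𝓝 0) := by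
    intro a
    have hX : rankOne ℂ (U.symm Ω) Ω ∈ centralizer (range fun c : ℂ => c • (1 : H →L[ℂ] H)) := by
      rintro _ ⟨c, rfl⟩
      simp
    have h := habel a _ (hprim ▸ hX) (U.symm Ω) Ω
    simp only [zero_apply, inner_zero_right] at h
    refine h.congr fun t => ?_
    rw [inner_commutator_rankOne_apply ((U.symm.norm_map Ω).trans hΩnorm) hΩnorm, ← hUsymmΩ,
      ← hrep, hinv, ← hcomm, hκ, hinv]
  exact hnotinv fun a => (sub_eq_zero.mp (tendsto_nhds_unique ((hw a).sub (hu a)) (hrel a))).symm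

/-- Let `κ` be a *-automorphism intertwining two commuting one-parameter
automorphism groups (`κ ∘ αu_t = αw_t ∘ κ`).  If `ω` is a primary state with separating GNS
vector which is mixing for `αw`, the relative translations act weakly asymptotically abelian
in its GNS representation, and `ω ∘ κ ≠ ω`, then `κ` is not unitarily implemented in the GNS
representation of `ω`. -/
theorem stmt5
    {A : Type*} [NormedRing A] [StarRing A] [CStarRing A] [CompleteSpace A]
    [NormedAlgebra ℂ A] [StarModule ℂ A]
    {H : Type*} [NormedAddCommGroup H] [InnerProductSpace ℂ H] [CompleteSpace H]
    -- two commuting one-parameter groups of *-automorphisms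
    (αu αw : ℝ → (A ≃⋆ₐ[ℂ] A))
    (hu0 : ∀ a : A, αu 0 a = a)
    (huadd : ∀ s t : ℝ, ∀ a : A, αu (s + t) a = αu s (αu t a))
    (hw0 : ∀ a : A, αw 0 a = a)
    (hwadd : ∀ s t : ℝ, ∀ a : A, αw (s + t) a = αw s (αw t a))
    (hcomm : ∀ s t : ℝ, ∀ a : A, αu s (αw t a) = αw t (αu s a))
    -- a *-automorphism intertwining the two groups
    (κ : A ≃⋆ₐ[ℂ] A)
    (hκ : ∀ t : ℝ, ∀ a : A, κ (αu t a) = αw t (κ a))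
    -- a state
    (ω : A →ₗ[ℂ] ℂ)
    (hω1 : ω 1 = 1) (hωpos : ∀ a : A, 0 ≤ ω (star a * a))
    -- GNS data for ω
    (π : A →⋆ₐ[ℂ] (H →L[ℂ] H)) (Ω : H) (hΩnorm : ‖Ω‖ = 1)
    (hrep : ∀ a : A, ω a = ⟪Ω, π a Ω⟫)
    (hcyc : (Submodule.span ℂ (Set.range fun b : A => π b Ω)).topologicalClosure = ⊤)
    -- Ω separating for M = π(A)''
    (hsep : ∀ X ∈ Set.centralizer (Set.centralizer (Set.range fun b : A => π b)),
        X Ω = 0 → X = 0)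
    -- primarity: M ∩ M' = ℂ·1
    (hprim : Set.centralizer (Set.centralizer (Set.range fun b : A => π b)) ∩
        Set.centralizer (Set.centralizer (Set.centralizer (Set.range fun b : A => π b))) =
        Set.range fun c : ℂ => c • (1 : H →L[ℂ] H))
    -- (A, αw, ω) is mixing
    (hinv : ∀ t : ℝ, ∀ a : A, ω (αw t a) = ω a)
    (hmix : ∀ a b : A, Tendsto (fun t => ω (b * αw t a)) atTop (nhds (ω a * ω b)))
    -- the relative translations αw_{-t} ∘ αu_t act weakly asymptotically abelian in π
    (habel : ∀ a : A,
      ∀ X' ∈ Set.centralizer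
        (Set.centralizer (Set.centralizer (Set.range fun b : A => π b)) ∩
          Set.centralizer (Set.centralizer (Set.centralizer (Set.range fun b : A => π b)))),
      WOTTendsto
        (fun t => π (αw (-t) (αu t a)) * X' - X' * π (αw (-t) (αu t a))) atTop 0)
    -- ω is not κ-invariant
    (hnotinv : ¬ ∀ a : A, ω (κ a) = ω a) :
    ¬ ∃ U : H ≃ₗᵢ[ℂ] H, ∀ (a : A) (v : H), π (κ a) v = U (π a (U.symm v)) :=
  stmt5_general αu αw hw0 hwadd hcomm κ hκ ω π Ω hΩnorm hrep hcyc hsep hprim hinv hmix habel hnotinv
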